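/- arXiv:2104.10220 — 4 statements merged into one kernel-verified Lean document; each statement's English description precedes it below -/
import Mathlib

section
/- Let |ψ⟩ = Σ_n λ_n |b_n⟩⊗|b_n⟩ with {|b_n⟩} an orthonormal family and λ_n real. Then |ψ⟩⟨ψ| = Σ_n λ_n² (|b_n⟩⟨b_n|)^{⊗2} + Σ_n Σ_{m<n} λ_n λ_m Σ_{p∈Z_4} (-1)^p (|φ^p_{b_n b_m}⟩⟨φ^p_{b_n b_m}|)^{⊗2}, where |φ^p_{xy}⟩ = (|x⟩ + i^p |y⟩)/√2. -/
open scoped Kronecker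

/-- The rank-one operator `|v⟩⟨w|` as a matrix: entries `v i * conj (w j)`. -/
noncomputable def outer {ι : Type*} (v w : ι → ℂ) : Matrix ι ι ℂ :=
  Matrix.of fun i j => v i * (starRingEnd ℂ) (w j)

/-- The tensor product of two vectors, in coordinates. -/
noncomputable def tensorVec {ι : Type*} (x y : ι → ℂ) : ι × ι → ℂ :=
  fun q => x q.1 * y q.2

set_option maxHeartbeats 1000000 in
private lemma key_phase (s A B C D A' B' C' D' : ℂ) (hs : s ^ 2 = 2⁻¹) :
    ∑ p ∈ Finset.range 4, (-1 : ℂ) ^ p *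
      (s * (A + Complex.I ^ p * B) * (s * (C + ((starRingEnd ℂ) Complex.I) ^ p * D)) *
       (s * (A' + Complex.I ^ p * B') * (s * (C' + ((starRingEnd ℂ) Complex.I) ^ p * D'))))
    = B * C * (B' * C') + A * D * (A' * D') := by
  have h4 : s ^ 4 = 4⁻¹ := by
    have : s ^ 4 = (s ^ 2) ^ 2 := by ring
    rw [this, hs]; norm_num
  have e3 : Complex.I ^ 3 = -Complex.I := by rw [pow_succ, Complex.I_sq]; ring
  have e6 : Complex.I ^ 6 = -1 := by
    rw [show (6 : ℕ) = 2 * 3 from rfl, pow_mul, Complex.I_sq]; ring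
  have e9 : Complex.I ^ 9 = Complex.I := by
    rw [show (9 : ℕ) = 2 * 4 + 1 from rfl, pow_succ, pow_mul, Complex.I_sq]; ring
  have e4 : Complex.I ^ 4 = 1 := by
    rw [show (4 : ℕ) = 2 * 2 from rfl, pow_mul, Complex.I_sq]; ring
  have e12 : Complex.I ^ 12 = 1 := by
    rw [show (12 : ℕ) = 2 * 6 from rfl, pow_mul, Complex.I_sq]; ring
  simp only [Finset.sum_range_succ, Finset.sum_range_zero]
  simp only [pow_zero, pow_one, map_one, Complex.conj_I, one_mul,
    Complex.I_sq, map_pow, map_neg, map_one]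
  ring_nf
  simp only [Complex.I_sq, h4, e3, e6, e9, e4, e12]
  ring

private lemma sum_split {M : Type*} [AddCommMonoid M] {k : ℕ} (f : Fin k → Fin k → M) :
    ∑ n, ∑ m, f n m
      = (∑ n, f n n) + ∑ n, ∑ m ∈ Finset.univ.filter (· < n), (f n m + f m n) := by
  classical
  have h1 : ∀ n : Fin k, (∑ m, f n m)
      = (∑ m ∈ Finset.univ.filter (· < n), f n m)
        + (f n n + ∑ m ∈ Finset.univ.filter (fun m => n < m), f n m) := by
    intro n
    rw [← Finset.sum_filter_add_sum_filter_not Finset.univ (· < n) (f n)]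
    congr 1
    have h2 : Finset.univ.filter (fun m => ¬ m < n)
        = insert n (Finset.univ.filter (fun m => n < m)) := by
      ext m
      simp only [Finset.mem_filter, Finset.mem_univ, true_and, Finset.mem_insert, not_lt]
      constructor
      · intro h; rcases eq_or_lt_of_le h with h | h
        · exact Or.inl h.symm
        · exact Or.inr h
      · rintro (rfl | h); · exact le_refl _
        · exact le_of_lt h
    rw [h2, Finset.sum_insert (by simp)]
  have hswap : (∑ n, ∑ m ∈ Finset.univ.filter (fun m => n < m), f n m)
      = ∑ n, ∑ m ∈ Finset.univ.filter (· < n), f m n :=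
    Finset.sum_comm' (by intro x y; simp)
  simp only [h1, Finset.sum_add_distrib, hswap]
  abel

theorem stmt2 {ι : Type*} [Fintype ι] (k : ℕ) (b : Fin k → ι → ℂ)
    (hb : ∀ n m, ∑ i, (starRingEnd ℂ) (b n i) * b m i = if n = m then 1 else 0)
    (l : Fin k → ℝ)
    (ψ : ι × ι → ℂ) (hψ : ψ = ∑ n, (l n : ℂ) • tensorVec (b n) (b n))
    (φ : ℕ → Fin k → Fin k → ι → ℂ)
    (hφ : ∀ p n m, φ p n m =
      fun i => ((Real.sqrt 2 : ℂ))⁻¹ * (b n i + Complex.I ^ p * b m i)) :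
    outer ψ ψ =
      (∑ n, ((l n : ℂ) ^ 2) • (outer (b n) (b n) ⊗ₖ outer (b n) (b n)))
      + ∑ n, ∑ m ∈ Finset.univ.filter (· < n), ((l n : ℂ) * (l m : ℂ)) •
          ∑ p ∈ Finset.range 4, ((-1 : ℂ) ^ p) •
            (outer (φ p n m) (φ p n m) ⊗ₖ outer (φ p n m) (φ p n m)) := by
  have hs : ((Real.sqrt 2 : ℂ))⁻¹ ^ 2 = 2⁻¹ := by
    rw [inv_pow, ← Complex.ofReal_pow, Real.sq_sqrt (by norm_num : (2:ℝ) ≥ 0)]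
    norm_num
  subst hψ
  ext ⟨a1, a2⟩ ⟨c1, c2⟩
  simp only [outer, Matrix.add_apply, Matrix.sum_apply, Matrix.smul_apply,
    Matrix.kroneckerMap_apply, Matrix.of_apply, Finset.sum_apply, Pi.smul_apply,
    tensorVec, smul_eq_mul, hφ, map_sum, map_mul, map_add, map_inv₀, map_pow,
    Complex.conj_ofReal]
  rw [Finset.sum_mul_sum]
  rw [sum_split (fun n m => ((l n : ℂ) * (b n a1 * b n a2)) *
    ((l m : ℂ) * ((starRingEnd ℂ) (b m c1) * (starRingEnd ℂ) (b m c2))))]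
  congr 1
  · exact Finset.sum_congr rfl fun n _ => by ring
  · refine Finset.sum_congr rfl fun n _ => Finset.sum_congr rfl fun m _ => ?_
    rw [key_phase ((Real.sqrt 2 : ℂ))⁻¹ (b n a1) (b m a1) ((starRingEnd ℂ) (b n c1))
      ((starRingEnd ℂ) (b m c1)) (b n a2) (b m a2) ((starRingEnd ℂ) (b n c2))
      ((starRingEnd ℂ) (b m c2)) hs]
    ring
end

section
/- Let |ψ⟩ = (U⊗V) Σ_n λ_n |b_n⟩⊗|b_n⟩ with U,V unitary and {|b_n⟩} orthonormal basis vectors of H, λ_n real. Then for operators O₁,O₂ on H, ⟨ψ| O₁⊗O₂ |ψ⟩ = Σ_n λ_n² ⟨b_n|Õ₁|b_n⟩⟨b_n|Õ₂|b_n⟩ + Σ_{m<n} λ_n λ_m Σ_{p∈Z_4} (-1)^p ⟨φ^p_{b_n b_m}|Õ₁|φ^p_{b_n b_m}⟩⟨φ^p_{b_n b_m}|Õ₂|φ^p_{b_n b_m}⟩, where Õ₁ = U†O₁U, Õ₂ = V†O₂V and |φ^p_{xy}⟩ = (|x⟩ + i^p|y⟩)/√2. -/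
/-! The state is `(U ⊗ V) vec (diag λ)`, so its expectation of `O₁ ⊗ O₂` is the Hadamard form
`∑ₙₘ λₙ λₘ Õ₁ₙₘ Õ₂ₙₘ`. The diagonal terms are the first sum; each off-diagonal pair
`Õ₁ₙₘ Õ₂ₙₘ + Õ₁ₘₙ Õ₂ₘₙ` is recovered from the diagonal matrix elements in the four phase vectors
`φᵖₙₘ` by a discrete Fourier filter over `p ∈ ℤ/4`. -/

open Matrix Complex

open scoped Kronecker

namespace Matrix

variable {m n p R : Type*}

theorem star_mulVec_dotProduct_mulVec_mulVec [Fintype m] [Fintype n] [CommSemiring R] [StarRing R]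
    (M : Matrix m n R) (O : Matrix m m R) (v : n → R) :
    star (M *ᵥ v) ⬝ᵥ O *ᵥ (M *ᵥ v) = star v ⬝ᵥ (Mᴴ * O * M) *ᵥ v := by
  rw [star_mulVec, ← dotProduct_mulVec, mulVec_mulVec, mulVec_mulVec, Matrix.mul_assoc]

theorem star_dotProduct_kronecker_mulVec_vec_diagonal [Fintype m] [Fintype n] [Fintype p]
    [DecidableEq n] [CommSemiring R] [StarRing R]
    (U : Matrix m n R) (V : Matrix p n R) (O₁ : Matrix m m R) (O₂ : Matrix p p R) (c : n → R) :
    star ((U ⊗ₖ V) *ᵥ vec (diagonal c)) ⬝ᵥ (O₁ ⊗ₖ O₂) *ᵥ ((U ⊗ₖ V) *ᵥ vec (diagonal c)) =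
      star c ⬝ᵥ ((Uᴴ * O₁ * U) ⊙ (Vᴴ * O₂ * V)) *ᵥ c := by
  rw [star_mulVec_dotProduct_mulVec_mulVec, conjTranspose_kronecker, ← mul_kronecker_mul,
    ← mul_kronecker_mul, star_dotProduct_hadamard_mulVec_eq_kronecker]

theorem kronecker_mulVec_vec_diagonal [Fintype n] [DecidableEq n] [CommSemiring R]
    (U : Matrix m n R) (V : Matrix p n R) (c : n → R) (q : m × p) :
    ((U ⊗ₖ V) *ᵥ vec (diagonal c)) q = ∑ k, c k * U q.1 k * V q.2 k := by
  simp only [kronecker_mulVec_vec, vec, mul_apply (M := V * diagonal c), mul_diagonal,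
    transpose_apply]
  exact Finset.sum_congr rfl fun k _ => by ring

theorem star_dotProduct_mulVec_single_add_smul_single [Fintype n] [DecidableEq n]
    [CommSemiring R] [StarRing R] (A : Matrix n n R) (i j : n) (z : R) :
    star (Pi.single i 1 + z • Pi.single j 1) ⬝ᵥ A *ᵥ (Pi.single i 1 + z • Pi.single j 1) =
      A i i + z * A i j + star z * A j i + star z * z * A j j := by
  simp only [star_add, star_smul, Pi.star_single, star_one, mulVec_add, mulVec_smul, dotProduct_add,
    add_dotProduct, dotProduct_smul, smul_dotProduct, mulVec_single_one, single_one_dotProduct,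
    col_apply, smul_eq_mul]
  ring

end Matrix

theorem Fintype.sum_sum_eq_sum_diag_add_sum_lt {ι M : Type*} [Fintype ι] [LinearOrder ι]
    [AddCommMonoid M] (f : ι → ι → M) :
    ∑ i, ∑ j, f i j =
      ∑ i, f i i + ∑ i, ∑ j ∈ Finset.univ.filter (· < i), (f i j + f j i) := by
  have hrow (i : ι) : ∑ j, f i j = f i i + ∑ j ∈ Finset.univ.filter (· < i), f i j +
      ∑ j ∈ Finset.univ.filter (i < ·), f i j := by
    rw [Finset.sum_filter, Finset.sum_filter, ← Fintype.sum_ite_eq' i (f i),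
      ← Finset.sum_add_distrib, ← Finset.sum_add_distrib]
    refine Finset.sum_congr rfl fun j _ => ?_
    rcases lt_trichotomy j i with h | rfl | h
    · simp [h, h.ne, h.not_gt]
    · simp
    · simp [h, h.ne', h.not_gt]
  have hswap : ∑ i, ∑ j ∈ Finset.univ.filter (i < ·), f i j =
      ∑ i, ∑ j ∈ Finset.univ.filter (· < i), f j i := by
    simp only [Finset.sum_filter]
    exact Finset.sum_comm
  simp only [hrow, Finset.sum_add_distrib, hswap, add_assoc]

noncomputable def phaseVector {ι : Type*} [DecidableEq ι] (p : ℕ) (i j : ι) : ι → ℂ :=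
  (Real.sqrt 2 : ℂ)⁻¹ • (Pi.single i 1 + I ^ p • Pi.single j 1)

section phaseVector

variable {ι : Type*} [DecidableEq ι]

theorem phaseVector_apply (p : ℕ) (i j k : ι) :
    phaseVector p i j k =
      (Real.sqrt 2 : ℂ)⁻¹ * ((if k = i then 1 else 0) + I ^ p * (if k = j then 1 else 0)) := by
  simp [phaseVector, Pi.single_apply]

theorem star_dotProduct_mulVec_phaseVector [Fintype ι] (A : Matrix ι ι ℂ) (p : ℕ) (i j : ι) :
    star (phaseVector p i j) ⬝ᵥ A *ᵥ phaseVector p i j =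
      2⁻¹ * (A i i + I ^ p * A i j + star (I ^ p) * A j i + A j j) := by
  have hnorm : star ((Real.sqrt 2 : ℂ)⁻¹) * (Real.sqrt 2 : ℂ)⁻¹ = 2⁻¹ := by
    rw [star_inv₀, Complex.star_def, conj_ofReal, ← mul_inv, ← ofReal_mul,
      Real.mul_self_sqrt zero_le_two, ofReal_ofNat]
  have hphase : star (I ^ p) * I ^ p = 1 := by
    rw [star_pow, ← mul_pow, Complex.star_def, conj_I, neg_mul, I_mul_I, neg_neg, one_pow]
  rw [phaseVector, star_smul, mulVec_smul, smul_dotProduct, dotProduct_smul,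
    star_dotProduct_mulVec_single_add_smul_single, hphase, smul_smul, smul_eq_mul, hnorm]
  ring

theorem sum_range_four_neg_one_pow_mul_phaseVector [Fintype ι] (A B : Matrix ι ι ℂ) (i j : ι) :
    ∑ p ∈ Finset.range 4, (-1 : ℂ) ^ p *
        (star (phaseVector p i j) ⬝ᵥ A *ᵥ phaseVector p i j) *
        (star (phaseVector p i j) ⬝ᵥ B *ᵥ phaseVector p i j) =
      A i j * B i j + A j i * B j i := by
  -- As `(-1)ᵖ = i²ᵖ = i⁻²ᵖ`, summing over `p` keeps only the terms of the product in `i²ᵖ`, `i⁻²ᵖ`.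
  simp only [star_dotProduct_mulVec_phaseVector, Finset.sum_range_succ, Finset.sum_range_zero,
    Complex.star_def, map_pow, conj_I]
  have h3 : I ^ 3 = -I := I_pow_three
  have h6 : I ^ 6 = -1 := by rw [show 6 = 2 * 3 by rfl, pow_mul, I_sq]; norm_num
  ring_nf
  simp only [I_sq, h3, I_pow_four, h6]
  ring

end phaseVector

theorem stmt3_general {ι : Type*} [Fintype ι] [DecidableEq ι] [LinearOrder ι]
    (U V O₁ O₂ : Matrix ι ι ℂ)
    (l : ι → ℝ)
    (ψ : ι × ι → ℂ) (hψ : ∀ q, ψ q = ∑ n, (l n : ℂ) * U q.1 n * V q.2 n)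
    (φ : ℕ → ι → ι → ι → ℂ)
    (hφ : ∀ p n m, φ p n m = fun i =>
      ((Real.sqrt 2 : ℂ))⁻¹ *
        ((if i = n then 1 else 0) + Complex.I ^ p * (if i = m then 1 else 0))) :
    star ψ ⬝ᵥ ((O₁ ⊗ₖ O₂).mulVec ψ) =
      ∑ n, ((l n : ℂ) ^ 2) * ((Uᴴ * O₁ * U) n n) * ((Vᴴ * O₂ * V) n n)
      + ∑ n, ∑ m ∈ Finset.univ.filter (· < n), (l n : ℂ) * (l m : ℂ) *
          ∑ p ∈ Finset.range 4, ((-1 : ℂ) ^ p) *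
            (star (φ p n m) ⬝ᵥ ((Uᴴ * O₁ * U).mulVec (φ p n m))) *
            (star (φ p n m) ⬝ᵥ ((Vᴴ * O₂ * V).mulVec (φ p n m))) := by
  have hψ' : ψ = (U ⊗ₖ V) *ᵥ vec (diagonal fun n => (l n : ℂ)) :=
    funext fun q => by rw [hψ, kronecker_mulVec_vec_diagonal]
  have hφ' : φ = phaseVector := by
    funext p n m k
    rw [hφ, phaseVector_apply]
  have hexpand : star (fun n => (l n : ℂ)) ⬝ᵥ
      ((Uᴴ * O₁ * U) ⊙ (Vᴴ * O₂ * V)) *ᵥ (fun n => (l n : ℂ)) =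
      ∑ n, ∑ m, (l n : ℂ) * l m * ((Uᴴ * O₁ * U) n m * (Vᴴ * O₂ * V) n m) := by
    simp only [dotProduct, mulVec, hadamard_apply, Pi.star_apply, Complex.star_def, conj_ofReal,
      Finset.mul_sum]
    exact Finset.sum_congr rfl fun n _ => Finset.sum_congr rfl fun m _ => by ring
  rw [hψ', star_dotProduct_kronecker_mulVec_vec_diagonal, hexpand,
    Fintype.sum_sum_eq_sum_diag_add_sum_lt, hφ']
  simp only [sum_range_four_neg_one_pow_mul_phaseVector]
  congr 1
  · exact Finset.sum_congr rfl fun n _ => by ring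
  · exact Finset.sum_congr rfl fun n _ => Finset.sum_congr rfl fun m _ => by ring

theorem stmt3 {ι : Type*} [Fintype ι] [DecidableEq ι] [LinearOrder ι]
    (U V O₁ O₂ : Matrix ι ι ℂ)
    (hU : U ∈ Matrix.unitaryGroup ι ℂ) (hV : V ∈ Matrix.unitaryGroup ι ℂ)
    (l : ι → ℝ)
    (ψ : ι × ι → ℂ) (hψ : ∀ q, ψ q = ∑ n, (l n : ℂ) * U q.1 n * V q.2 n)
    (φ : ℕ → ι → ι → ι → ℂ)
    (hφ : ∀ p n m, φ p n m = fun i =>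
      ((Real.sqrt 2 : ℂ))⁻¹ *
        ((if i = n then 1 else 0) + Complex.I ^ p * (if i = m then 1 else 0))) :
    star ψ ⬝ᵥ ((O₁ ⊗ₖ O₂).mulVec ψ) =
      ∑ n, ((l n : ℂ) ^ 2) * ((Uᴴ * O₁ * U) n n) * ((Vᴴ * O₂ * V) n n)
      + ∑ n, ∑ m ∈ Finset.univ.filter (· < n), (l n : ℂ) * (l m : ℂ) *
          ∑ p ∈ Finset.range 4, ((-1 : ℂ) ^ p) *
            (star (φ p n m) ⬝ᵥ ((Uᴴ * O₁ * U).mulVec (φ p n m))) *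
            (star (φ p n m) ⬝ᵥ ((Vᴴ * O₂ * V).mulVec (φ p n m))) :=
  stmt3_general U V O₁ O₂ l ψ hψ φ hφ
end

section
/- Let O₁, O₂ be commuting self-adjoint unitaries on a finite-dimensional Hilbert space. For α,β ∈ {0,1} define C_{α,β} = (1/2)(I + (−1)^α O₁ + (−1)^β O₂ − (−1)^{α+β} O₁O₂). Then each C_{α,β} is a self-adjoint unitary, and O₁⊗O₂ + O₂⊗O₁ = O₁O₂⊗I + I⊗O₁O₂ + Σ_{α,β∈{0,1}} (−1)^{α+β} C_{α,β}⊗C_{α,β}. -/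
open Matrix

open scoped Kronecker

theorem stmt10 {ι : Type*} [Fintype ι] [DecidableEq ι]
    (O₁ O₂ : Matrix ι ι ℂ)
    (h1a : O₁ᴴ = O₁) (h1u : O₁ * O₁ = 1) (h2a : O₂ᴴ = O₂) (h2u : O₂ * O₂ = 1)
    (hcomm : O₁ * O₂ = O₂ * O₁)
    (C : Fin 2 → Fin 2 → Matrix ι ι ℂ)
    (hC : ∀ α β, C α β = (2 : ℂ)⁻¹ •
      (1 + ((-1 : ℂ) ^ (α : ℕ)) • O₁ + ((-1 : ℂ) ^ (β : ℕ)) • O₂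
        - ((-1 : ℂ) ^ ((α : ℕ) + (β : ℕ))) • (O₁ * O₂))) :
    (∀ α β, (C α β)ᴴ = C α β ∧ C α β * C α β = 1) ∧
      O₁ ⊗ₖ O₂ + O₂ ⊗ₖ O₁ =
        (O₁ * O₂) ⊗ₖ (1 : Matrix ι ι ℂ) + (1 : Matrix ι ι ℂ) ⊗ₖ (O₁ * O₂) +
          ∑ α : Fin 2, ∑ β : Fin 2,
            ((-1 : ℂ) ^ ((α : ℕ) + (β : ℕ))) • (C α β ⊗ₖ C α β) := by
  have hA : ∀ M : Matrix ι ι ℂ, O₁ * (O₁ * M) = M := by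
    intro M; rw [← mul_assoc, h1u, one_mul]
  have hB : ∀ M : Matrix ι ι ℂ, O₂ * (O₂ * M) = M := by
    intro M; rw [← mul_assoc, h2u, one_mul]
  have hS : ∀ M : Matrix ι ι ℂ, O₂ * (O₁ * M) = O₁ * (O₂ * M) := by
    intro M; rw [← mul_assoc, ← hcomm, mul_assoc]
  refine ⟨fun α β => ⟨?_, ?_⟩, ?_⟩
  · simp [hC, conjTranspose_smul, conjTranspose_add, conjTranspose_sub, h1a, h2a,
      conjTranspose_mul, ← hcomm, pow_add]
  · rw [hC]
    fin_cases α <;> fin_cases β <;>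
      · simp only [Fin.isValue, Fin.val_zero, Fin.val_one, pow_zero, pow_one, pow_add, one_smul,
          neg_smul, smul_neg, neg_neg, neg_one_mul, mul_neg, neg_mul, neg_sub, sub_neg_eq_add,
          mul_one, one_mul, smul_mul_smul_comm,
          sub_mul, mul_sub, add_mul, mul_add, smul_mul_assoc, mul_smul_comm, smul_smul,
          mul_assoc, h1u, h2u, hA, hB, hS, ← hcomm]
        module
  · simp only [Fin.sum_univ_two, hC, Fin.isValue, Fin.val_zero, Fin.val_one, pow_zero, pow_one,
      pow_add, one_smul, neg_smul, smul_neg, neg_neg, one_mul, mul_one, neg_one_mul, mul_neg,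
      neg_mul, neg_sub, sub_neg_eq_add,
      Matrix.add_kronecker, Matrix.kronecker_add, sub_eq_add_neg, ← neg_smul,
      Matrix.smul_kronecker, Matrix.kronecker_smul, smul_smul, smul_add, smul_sub]
    module
end

section
/- Let x ≠ y be N-bit strings differing in exactly d positions, and for integer p define the product state |ψ^p_{xy}⟩ = ⊗_j |ψ^{pj}_{xy}⟩ where |ψ^{pj}_{xy}⟩ = |x_j⟩ if x_j = y_j and (|x_j⟩ + e^{iπp/(2d)}|y_j⟩)/√2 otherwise. Then |x⟩⟨y|^{⊗2} + |y⟩⟨x|^{⊗2} = (4^d/(4d)) Σ_{p=0}^{4d−1} (−1)^p (|ψ^p_{xy}⟩⟨ψ^p_{xy}|)^{⊗2}. -/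
open scoped Kronecker

/-- The operator `|x⟩⟨y|` for computational basis states `x`, `y`. -/
noncomputable def basisOuter {N : ℕ} (x y : Fin N → Fin 2) :
    Matrix (Fin N → Fin 2) (Fin N → Fin 2) ℂ :=
  Matrix.of fun i j => (if i = x then 1 else 0) * (if j = y then 1 else 0)

/-!
Write `|ψ^p⟩ = Σ_i s_i ζ^{p k_i} |i⟩` with `ζ` a primitive `4d`-th root of unity, `k_i` the
number of differing positions at which `i` takes the bit of `y`, and `s_i = 2^{-d/2}` if `i`
agrees with `x` wherever `x` and `y` agree, `s_i = 0` otherwise. Since `-1 = ζ^{2d}`, the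
`((i,i'),(j,j'))` entry of the signed sum is `s_i s_i' s_j s_j'` times the geometric sum
`Σ_p ζ^{p m}` with `m = 2d + k_i + k_i' - k_j - k_j' ∈ [0, 4d]`, which is `4d` if `m ∈ {0, 4d}`
and `0` otherwise. Finally `m = 0` forces `i = i' = x`, `j = j' = y`, and `m = 4d` the reverse.
-/

open Finset

theorem Fin.two_eq_of_ne_of_ne {a b c : Fin 2} (hab : a ≠ b) (hca : c ≠ a) : c = b := by omega

namespace IsPrimitiveRoot

theorem pow_half_eq_neg_one {R : Type*} [CommRing R] [IsDomain R] {ζ : R} {n : ℕ}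
    (hζ : IsPrimitiveRoot ζ (2 * n)) (hn : n ≠ 0) : ζ ^ n = -1 :=
  (hζ.pow (by positivity) (mul_comm 2 n)).eq_neg_one_of_two_right

theorem conj_eq_inv {ζ : ℂ} {n : ℕ} (hζ : IsPrimitiveRoot ζ n) (hn : n ≠ 0) :
    starRingEnd ℂ ζ = ζ⁻¹ :=
  (Complex.inv_eq_conj (hζ.norm'_eq_one hn)).symm

theorem neg_one_pow_mul_phase_product {ζ : ℂ} {n : ℕ} (hζ : IsPrimitiveRoot ζ (2 * n))
    (hn : n ≠ 0) (p a b a' b' : ℕ) :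
    (-1) ^ p * ((ζ ^ p) ^ a * starRingEnd ℂ ((ζ ^ p) ^ b) *
      ((ζ ^ p) ^ a' * starRingEnd ℂ ((ζ ^ p) ^ b'))) =
      (ζ ^ (n + a + a' - b - b' : ℤ)) ^ p := by
  have h0 : ζ ≠ 0 := hζ.ne_zero (by omega)
  rw [← hζ.pow_half_eq_neg_one hn]
  simp only [map_pow, hζ.conj_eq_inv (by omega), zpow_sub₀ h0, zpow_add₀ h0, zpow_natCast,
    inv_pow, div_pow]
  field_simp
  ring

theorem sum_range_zpow_pow {K : Type*} [Field K] {ζ : K} {n : ℕ} (hζ : IsPrimitiveRoot ζ n)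
    (m : ℤ) : ∑ p ∈ range n, (ζ ^ m) ^ p = if (n : ℤ) ∣ m then (n : K) else 0 := by
  split_ifs with h
  · simp [(hζ.zpow_eq_one_iff_dvd m).mpr h]
  · have hpow : (ζ ^ m) ^ n = 1 := by
      rw [← zpow_natCast, ← zpow_mul, mul_comm, zpow_mul, zpow_natCast, hζ.pow_eq_one,
        one_zpow]
    rw [geom_sum_eq (mt (hζ.zpow_eq_one_iff_dvd m).mp h), hpow, sub_self, zero_div]

end IsPrimitiveRoot

theorem sum_neg_one_pow_smul_kron_outer_apply {ι : Type*} {ζ : ℂ} {n : ℕ}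
    (hζ : IsPrimitiveRoot ζ (2 * n)) (hn : n ≠ 0) (s : ι → ℝ) (k : ι → ℕ)
    (ψ : ℕ → ι → ℂ) (hψ : ∀ p i, ψ p i = s i * (ζ ^ p) ^ k i) (i i' j j' : ι) :
    (∑ p ∈ range (2 * n), (-1 : ℂ) ^ p • (outer (ψ p) (ψ p) ⊗ₖ outer (ψ p) (ψ p)))
        (i, i') (j, j') =
      s i * s j * s i' * s j' *
        if (2 * n : ℤ) ∣ n + k i + k i' - k j - k j' then (2 * n : ℂ) else 0 := by
  have hsum := hζ.sum_range_zpow_pow (n + k i + k i' - k j - k j')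
  push_cast at hsum
  rw [← hsum, mul_sum, Matrix.sum_apply]
  refine sum_congr rfl fun p _ => ?_
  rw [← hζ.neg_one_pow_mul_phase_product hn]
  simp only [Matrix.smul_apply, Matrix.kroneckerMap_apply, outer, Matrix.of_apply, hψ, map_mul,
    Complex.conj_ofReal, smul_eq_mul]
  ring

theorem inv_sqrt_two_pow_pow_four (d : ℕ) :
    ((Real.sqrt 2)⁻¹ ^ d) ^ 4 = ((4 : ℝ) ^ d)⁻¹ := by
  have h4 : Real.sqrt 2 ^ 4 = 4 := by
    rw [show 4 = 2 * 2 from rfl, pow_mul, Real.sq_sqrt zero_le_two]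
    norm_num
  rw [← pow_mul, mul_comm, pow_mul, inv_pow, h4, inv_pow]

section

variable {ι : Type*} (x y : ι → Fin 2)

def AgreesOffDiff (i : ι → Fin 2) : Prop := ∀ t, x t = y t → i t = x t

variable {x y}

theorem agreesOffDiff_left : AgreesOffDiff x y x := fun _ _ => rfl

theorem agreesOffDiff_right : AgreesOffDiff x y y := fun _ h => h.symm

variable (x y) [Fintype ι]

instance : DecidablePred (AgreesOffDiff x y) := fun _ => Fintype.decidableForallFintype

def diffPositions : Finset ι := univ.filter fun t => x t ≠ y t

def flipCount (i : ι → Fin 2) : ℕ := #{t ∈ diffPositions x y | i t = y t}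

noncomputable def phaseStateAmplitude (i : ι → Fin 2) : ℝ :=
  if AgreesOffDiff x y i then (Real.sqrt 2)⁻¹ ^ #(diffPositions x y) else 0

variable {x y}

theorem card_diffPositions_ne_zero (hxy : x ≠ y) : #(diffPositions x y) ≠ 0 := by
  obtain ⟨t, ht⟩ := Function.ne_iff.mp hxy
  exact card_ne_zero.mpr ⟨t, mem_filter.mpr ⟨mem_univ t, ht⟩⟩

theorem flipCount_le (i : ι → Fin 2) : flipCount x y i ≤ #(diffPositions x y) :=
  card_filter_le _ _

theorem flipCount_eq_zero_iff {i : ι → Fin 2} (hi : AgreesOffDiff x y i) :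
    flipCount x y i = 0 ↔ i = x := by
  simp only [flipCount, card_filter_eq_zero_iff, diffPositions, mem_filter, mem_univ, true_and]
  refine ⟨fun h => funext fun t => ?_, fun h t hxy hiy => hxy (h ▸ hiy)⟩
  by_cases hxy : x t = y t
  · exact hi t hxy
  · exact Fin.two_eq_of_ne_of_ne (Ne.symm hxy) (h t hxy)

theorem flipCount_eq_card_iff {i : ι → Fin 2} (hi : AgreesOffDiff x y i) :
    flipCount x y i = #(diffPositions x y) ↔ i = y := by
  simp only [flipCount, card_filter_eq_iff, diffPositions, mem_filter, mem_univ, true_and]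
  refine ⟨fun h => funext fun t => ?_, fun h t _ => h ▸ rfl⟩
  by_cases hxy : x t = y t
  · exact (hi t hxy).trans hxy
  · exact h t hxy

theorem prod_ite_eq_mul_pow_flipCount {R : Type*} [CommMonoidWithZero R] (a w : R)
    (i : ι → Fin 2) :
    ∏ t, (if x t = y t then (if i t = x t then 1 else 0)
      else if i t = x t then a else if i t = y t then a * w else 0) =
      (if AgreesOffDiff x y i then 1 else 0) * a ^ #(diffPositions x y) * w ^ flipCount x y i := by
  rw [prod_ite, prod_boole, mul_assoc]
  congr 1
  · simp [AgreesOffDiff]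
  · have hfactor : ∀ t ∈ diffPositions x y,
        (if i t = x t then a else if i t = y t then a * w else 0) =
          a * if i t = y t then w else 1 := fun t ht => by
      have hxy : x t ≠ y t := (mem_filter.mp ht).2
      by_cases hix : i t = x t
      · simp [hix, hxy]
      · simp [Fin.two_eq_of_ne_of_ne hxy hix, hxy.symm]
    change ∏ t ∈ diffPositions x y, _ = _
    rw [prod_congr rfl hfactor, prod_mul_distrib, prod_const, prod_ite, prod_const,
      prod_const_one, mul_one]
    rfl

theorem four_mul_card_dvd_iff {i i' j j' : ι → Fin 2} (hi : AgreesOffDiff x y i)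
    (hi' : AgreesOffDiff x y i') (hj : AgreesOffDiff x y j) (hj' : AgreesOffDiff x y j') :
    (4 * #(diffPositions x y) : ℤ) ∣ 2 * #(diffPositions x y) + flipCount x y i
        + flipCount x y i' - flipCount x y j - flipCount x y j' ↔
      (i = x ∧ i' = x ∧ j = y ∧ j' = y) ∨ (i = y ∧ i' = y ∧ j = x ∧ j' = x) := by
  rw [← flipCount_eq_zero_iff hi, ← flipCount_eq_zero_iff hi', ← flipCount_eq_zero_iff hj,
    ← flipCount_eq_zero_iff hj', ← flipCount_eq_card_iff hi, ← flipCount_eq_card_iff hi',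
    ← flipCount_eq_card_iff hj, ← flipCount_eq_card_iff hj']
  have := flipCount_le (x := x) (y := y) i
  have := flipCount_le (x := x) (y := y) i'
  have := flipCount_le (x := x) (y := y) j
  have := flipCount_le (x := x) (y := y) j'
  constructor
  · intro h
    rcases lt_or_ge (2 * #(diffPositions x y) + flipCount x y i + flipCount x y i'
        - flipCount x y j - flipCount x y j' : ℤ) (4 * #(diffPositions x y)) with hlt | hge
    · have := Int.eq_zero_of_dvd_of_nonneg_of_lt (by omega) hlt h
      omega
    · omega
  · rintro (h | h)
    · exact ⟨0, by omega⟩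
    · exact ⟨1, by omega⟩

end

theorem basisOuter_kron_add_apply {N : ℕ} {x y : Fin N → Fin 2} (hxy : x ≠ y)
    (i i' j j' : Fin N → Fin 2) :
    (basisOuter x y ⊗ₖ basisOuter x y + basisOuter y x ⊗ₖ basisOuter y x) (i, i') (j, j') =
      if (i = x ∧ i' = x ∧ j = y ∧ j' = y) ∨ (i = y ∧ i' = y ∧ j = x ∧ j' = x) then 1
      else 0 := by
  simp only [Matrix.add_apply, Matrix.kroneckerMap_apply, basisOuter, Matrix.of_apply]
  split_ifs <;> simp_all [eq_comm]

theorem agreesOffDiff_of_basis_pattern {ι : Type*} {x y i i' j j' : ι → Fin 2}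
    (h : (i = x ∧ i' = x ∧ j = y ∧ j' = y) ∨ (i = y ∧ i' = y ∧ j = x ∧ j' = x)) :
    AgreesOffDiff x y i ∧ AgreesOffDiff x y i' ∧ AgreesOffDiff x y j ∧
      AgreesOffDiff x y j' := by
  rcases h with ⟨rfl, rfl, rfl, rfl⟩ | ⟨rfl, rfl, rfl, rfl⟩
  · exact ⟨agreesOffDiff_left, agreesOffDiff_left, agreesOffDiff_right, agreesOffDiff_right⟩
  · exact ⟨agreesOffDiff_right, agreesOffDiff_right, agreesOffDiff_left, agreesOffDiff_left⟩

theorem phaseStateAmplitude_mul_four {ι : Type*} [Fintype ι] {x y : ι → Fin 2}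
    (i i' j j' : ι → Fin 2) :
    phaseStateAmplitude x y i * phaseStateAmplitude x y j * phaseStateAmplitude x y i' *
        phaseStateAmplitude x y j' =
      if AgreesOffDiff x y i ∧ AgreesOffDiff x y i' ∧ AgreesOffDiff x y j ∧
        AgreesOffDiff x y j' then ((4 : ℝ) ^ #(diffPositions x y))⁻¹ else 0 := by
  split_ifs with hag
  · obtain ⟨hi, hi', hj, hj'⟩ := hag
    simp only [phaseStateAmplitude, if_pos hi, if_pos hi', if_pos hj, if_pos hj']
    rw [← inv_sqrt_two_pow_pow_four]
    ring
  · simp only [not_and_or] at hag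
    rcases hag with h | h | h | h <;> simp [phaseStateAmplitude, h]

theorem four_pow_div_mul_phaseStateAmplitude {ι : Type*} [Fintype ι] {x y : ι → Fin 2}
    (hxy : x ≠ y) (i i' j j' : ι → Fin 2) :
    (4 : ℂ) ^ #(diffPositions x y) / (4 * #(diffPositions x y)) *
      (phaseStateAmplitude x y i * phaseStateAmplitude x y j * phaseStateAmplitude x y i' *
        phaseStateAmplitude x y j' *
        if (4 * #(diffPositions x y) : ℤ) ∣ 2 * #(diffPositions x y)
            + flipCount x y i + flipCount x y i' - flipCount x y j - flipCount x y j'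
          then (4 * #(diffPositions x y) : ℂ) else 0) =
      if (i = x ∧ i' = x ∧ j = y ∧ j' = y) ∨ (i = y ∧ i' = y ∧ j = x ∧ j' = x) then 1
      else 0 := by
  have hd0 := card_diffPositions_ne_zero hxy
  simp only [← Complex.ofReal_mul, phaseStateAmplitude_mul_four]
  by_cases hag : AgreesOffDiff x y i ∧ AgreesOffDiff x y i' ∧ AgreesOffDiff x y j ∧
      AgreesOffDiff x y j'
  · rw [if_pos hag]
    obtain ⟨hi, hi', hj, hj'⟩ := hag
    simp only [four_mul_card_dvd_iff hi hi' hj hj']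
    split_ifs
    · push_cast
      field_simp
    · simp
  · rw [if_neg hag, if_neg (mt agreesOffDiff_of_basis_pattern hag)]
    simp

theorem stmt16 {N : ℕ} (x y : Fin N → Fin 2) (hxy : x ≠ y)
    (d : ℕ) (hd : d = (Finset.univ.filter fun j => x j ≠ y j).card)
    (ψ : ℕ → (Fin N → Fin 2) → ℂ)
    (hψ : ∀ p i, ψ p i = ∏ j,
      (if x j = y j then (if i j = x j then (1 : ℂ) else 0)
       else (if i j = x j then ((Real.sqrt 2 : ℂ))⁻¹
         else if i j = y j then
           ((Real.sqrt 2 : ℂ))⁻¹ * Complex.exp ((Real.pi : ℂ) * p / (2 * d) * Complex.I)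
         else 0))) :
    basisOuter x y ⊗ₖ basisOuter x y + basisOuter y x ⊗ₖ basisOuter y x =
      ((4 : ℂ) ^ d / (4 * d)) • ∑ p ∈ Finset.range (4 * d), ((-1 : ℂ) ^ p) •
        (outer (ψ p) (ψ p) ⊗ₖ outer (ψ p) (ψ p)) := by
  change d = #(diffPositions x y) at hd
  have hd0 : d ≠ 0 := hd ▸ card_diffPositions_ne_zero hxy
  set ζ := Complex.exp (2 * Real.pi * Complex.I / (2 * (2 * d) : ℕ))
  have hζ : IsPrimitiveRoot ζ (2 * (2 * d)) := Complex.isPrimitiveRoot_exp _ (by positivity)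
  have hψζ : ∀ p i, ψ p i = phaseStateAmplitude x y i * (ζ ^ p) ^ flipCount x y i := by
    intro p i
    have hphase : Complex.exp (Real.pi * p / (2 * d) * Complex.I) = ζ ^ p := by
      rw [← Complex.exp_nat_mul]
      congr 1
      push_cast
      field_simp
    rw [hψ, prod_ite_eq_mul_pow_flipCount, hphase, ← hd]
    by_cases hi : AgreesOffDiff x y i <;> simp [phaseStateAmplitude, hi, hd]
  ext ⟨i, i'⟩ ⟨j, j'⟩
  rw [show 4 * d = 2 * (2 * d) by ring, Matrix.smul_apply,
    sum_neg_one_pow_smul_kron_outer_apply hζ (by positivity) _ _ ψ hψζ,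
    basisOuter_kron_add_apply hxy, smul_eq_mul, hd, ← four_pow_div_mul_phaseStateAmplitude hxy]
  push_cast
  ring_nf
end
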